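/- arXiv:1801.02259 — 4 statements merged into one kernel-verified Lean document; each statement's English description precedes it below -/
import Mathlib

section
/- For every multiplier λ, every t ∈ {1,…,T+1}, every joint state x = (x^1,…,x^n) ∈ ∏_{i=1}^n S_i and every v ∈ V, the joint relaxed value function decouples as L_t(x,v;λ) = ∑_{i=1}^n L^i_t(x^i,v;λ) − M_t(v;λ). (Theorem 3.1: the Lagrangian recursion of the weakly coupled stochastic unit commitment problem decomposes into one independent recursion per generator, minus the expected discounted penalty of the demand process.) -/
open Finset

/-- Weakly coupled stochastic unit commitment setup. -/
structure UCSetup (T n : ℕ) (V D : Type) [Fintype V] [Fintype D]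
    (S C : Fin n → Type) where
  P : Fin T → V → D → ℝ
  ftil : Fin T → V → D → V
  d : V → ℝ
  A : Fin T → (i : Fin n) → S i → Finset (C i)
  z : (i : Fin n) → C i → ℝ
  g : Fin T → (i : Fin n) → S i → C i → ℝ
  f : Fin T → (i : Fin n) → S i → C i → D → S i
  A_nonempty : ∀ t i s, (A t i s).Nonempty
  P_nonneg : ∀ t v w, 0 ≤ P t v w
  P_sum_one : ∀ t v, (∑ w, P t v w) = 1

namespace UCSetup

variable {T n : ℕ} {V D : Type} [Fintype V] [Fintype D] {S C : Fin n → Type}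

/-- Joint admissible action set at stage `t` in joint state `x`. -/
noncomputable def acts (u : UCSetup T n V D S C) (t : Fin T) (x : ∀ i, S i) :
    Finset (∀ i, C i) :=
  Fintype.piFinset fun i => u.A t i (x i)

lemma acts_nonempty (u : UCSetup T n V D S C) (t : Fin T) (x : ∀ i, S i) :
    (u.acts t x).Nonempty :=
  Fintype.piFinset_nonempty.mpr fun i => u.A_nonempty t i (x i)

/-- Joint relaxed (Lagrangian) value functions, 0-indexed: stage `t ∈ {0,…,T-1}`
corresponds to period `t+1`, and `L T = 0` is the terminal value (period `T+1`). -/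
noncomputable def L (u : UCSetup T n V D S C) (lam : Fin T → V → ℝ) (t : ℕ) :
    (∀ i, S i) → V → ℝ :=
  if h : t < T then fun x v =>
    (u.acts ⟨t, h⟩ x).inf' (u.acts_nonempty ⟨t, h⟩ x) fun a =>
      (∑ i, u.g ⟨t, h⟩ i (x i) (a i))
        + lam ⟨t, h⟩ v * ((∑ i, u.z i (a i)) - u.d v)
        + ∑ w, u.P ⟨t, h⟩ v w *
            u.L lam (t + 1) (fun i => u.f ⟨t, h⟩ i (x i) (a i) w) (u.ftil ⟨t, h⟩ v w)
  else fun _ _ => 0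
termination_by T - t
decreasing_by omega

/-- Per-generator relaxed value functions. -/
noncomputable def Li (u : UCSetup T n V D S C) (lam : Fin T → V → ℝ) (i : Fin n)
    (t : ℕ) : S i → V → ℝ :=
  if h : t < T then fun x v =>
    (u.A ⟨t, h⟩ i x).inf' (u.A_nonempty ⟨t, h⟩ i x) fun a =>
      u.g ⟨t, h⟩ i x a + lam ⟨t, h⟩ v * u.z i a
        + ∑ w, u.P ⟨t, h⟩ v w *
            u.Li lam i (t + 1) (u.f ⟨t, h⟩ i x a w) (u.ftil ⟨t, h⟩ v w)
  else fun _ _ => 0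
termination_by T - t
decreasing_by omega

/-- Expected discounted multiplier-weighted demand along the summary chain:
`M t v = ∑_{r=t}^{T-1} E[λ_r(v_r)·d(v_r) | v_t = v]`. -/
noncomputable def M (u : UCSetup T n V D S C) (lam : Fin T → V → ℝ) (t : ℕ) :
    V → ℝ :=
  if h : t < T then fun v =>
    lam ⟨t, h⟩ v * u.d v
      + ∑ w, u.P ⟨t, h⟩ v w * u.M lam (t + 1) (u.ftil ⟨t, h⟩ v w)
  else fun _ => 0
termination_by T - t
decreasing_by omega

open Classical in
/-- Feasible joint action set: admissible actions whose total production meets demand. -/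
noncomputable def feas (u : UCSetup T n V D S C) (t : Fin T) (x : ∀ i, S i) (v : V) :
    Finset (∀ i, C i) :=
  (u.acts t x).filter fun a => (∑ i, u.z i (a i)) = u.d v

/-- Constrained value functions (demand constraint enforced). -/
noncomputable def J (u : UCSetup T n V D S C)
    (hfeas : ∀ t x v, (u.feas t x v).Nonempty) (t : ℕ) : (∀ i, S i) → V → ℝ :=
  if h : t < T then fun x v =>
    (u.feas ⟨t, h⟩ x v).inf' (hfeas ⟨t, h⟩ x v) fun a =>
      (∑ i, u.g ⟨t, h⟩ i (x i) (a i))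
        + ∑ w, u.P ⟨t, h⟩ v w *
            u.J hfeas (t + 1) (fun i => u.f ⟨t, h⟩ i (x i) (a i) w) (u.ftil ⟨t, h⟩ v w)
  else fun _ _ => 0
termination_by T - t
decreasing_by omega

/-- Lagrangian value functions of a fixed Markov policy `π`. -/
noncomputable def W (u : UCSetup T n V D S C) (lam : Fin T → V → ℝ)
    (π : Fin T → (∀ i, S i) → V → ∀ i, C i) (t : ℕ) : (∀ i, S i) → V → ℝ :=
  if h : t < T then fun x v =>
    (∑ i, u.g ⟨t, h⟩ i (x i) (π ⟨t, h⟩ x v i))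
      + lam ⟨t, h⟩ v * ((∑ i, u.z i (π ⟨t, h⟩ x v i)) - u.d v)
      + ∑ w, u.P ⟨t, h⟩ v w *
          u.W lam π (t + 1) (fun i => u.f ⟨t, h⟩ i (x i) (π ⟨t, h⟩ x v i) w)
            (u.ftil ⟨t, h⟩ v w)
  else fun _ _ => 0
termination_by T - t
decreasing_by omega

/-- A Markov policy is admissible if each component action is in the admissible set. -/
def IsPolicy (u : UCSetup T n V D S C)
    (π : Fin T → (∀ i, S i) → V → ∀ i, C i) : Prop :=
  ∀ t x v i, π t x v i ∈ u.A t i (x i)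

end UCSetup

/-! Backward induction on `t`. The multiplier term `λ_t(v)·(∑ᵢ zⁱ(aⁱ) − d(v))` splits into
per-generator terms `λ_t(v)·zⁱ(aⁱ)` and the action-independent `−λ_t(v)·d(v)`, so with
`L_{t+1} = ∑ᵢ Lⁱ_{t+1} − M_{t+1}` the stage-`t` objective of a joint action is a sum of
per-generator objectives minus `M_t(v)`. The joint action set is a product, and the minimum over
a product of a sum of coordinatewise terms is the sum of the coordinatewise minima. -/

theorem Fintype.inf'_piFinset_sum {ι β : Type*} [Fintype ι] [DecidableEq ι] {κ : ι → Type*}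
    [AddCommMonoid β] [LinearOrder β] [IsOrderedAddMonoid β]
    (s : ∀ i, Finset (κ i)) (hs : ∀ i, (s i).Nonempty) (f : ∀ i, κ i → β) :
    (piFinset s).inf' (piFinset_nonempty.mpr hs) (fun a => ∑ i, f i (a i)) =
      ∑ i, (s i).inf' (hs i) (f i) := by
  apply le_antisymm
  · choose b hb hbf using fun i => (s i).exists_mem_eq_inf' (hs i) (f i)
    calc (piFinset s).inf' _ (fun a => ∑ i, f i (a i))
        ≤ ∑ i, f i (b i) := Finset.inf'_le _ (mem_piFinset.mpr hb)
      _ = ∑ i, (s i).inf' (hs i) (f i) := by simp only [hbf]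
  · exact Finset.le_inf' _ _ fun a ha =>
      Finset.sum_le_sum fun i _ => Finset.inf'_le _ (mem_piFinset.mp ha i)

theorem Finset.inf'_sub_const {α β : Type*} [AddCommGroup β] [LinearOrder β]
    [IsOrderedAddMonoid β] {s : Finset α} (hs : s.Nonempty) (f : α → β) (c : β) :
    s.inf' hs (fun a => f a - c) = s.inf' hs f - c :=
  (apply_inf'_eq_inf'_comp hs (· - c) fun p q => (min_sub_sub_right p q c).symm).symm

namespace UCSetup

variable {T n : ℕ} {V D : Type} [Fintype V] [Fintype D] {S C : Fin n → Type}
  (u : UCSetup T n V D S C) (lam : Fin T → V → ℝ)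

section Unfold

variable {t : ℕ}

theorem L_of_lt (h : t < T) (x : ∀ i, S i) (v : V) :
    u.L lam t x v = (u.acts ⟨t, h⟩ x).inf' (u.acts_nonempty ⟨t, h⟩ x) fun a =>
      (∑ i, u.g ⟨t, h⟩ i (x i) (a i))
        + lam ⟨t, h⟩ v * ((∑ i, u.z i (a i)) - u.d v)
        + ∑ w, u.P ⟨t, h⟩ v w *
            u.L lam (t + 1) (fun i => u.f ⟨t, h⟩ i (x i) (a i) w) (u.ftil ⟨t, h⟩ v w) := by
  rw [L, dif_pos h]

theorem Li_of_lt (h : t < T) (i : Fin n) (x : S i) (v : V) :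
    u.Li lam i t x v = (u.A ⟨t, h⟩ i x).inf' (u.A_nonempty ⟨t, h⟩ i x) fun a =>
      u.g ⟨t, h⟩ i x a + lam ⟨t, h⟩ v * u.z i a
        + ∑ w, u.P ⟨t, h⟩ v w * u.Li lam i (t + 1) (u.f ⟨t, h⟩ i x a w) (u.ftil ⟨t, h⟩ v w) := by
  rw [Li, dif_pos h]

theorem M_of_lt (h : t < T) (v : V) :
    u.M lam t v = lam ⟨t, h⟩ v * u.d v
      + ∑ w, u.P ⟨t, h⟩ v w * u.M lam (t + 1) (u.ftil ⟨t, h⟩ v w) := by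
  rw [M, dif_pos h]

theorem L_of_le (h : T ≤ t) (x : ∀ i, S i) (v : V) : u.L lam t x v = 0 := by
  rw [L, dif_neg h.not_gt]

theorem Li_of_le (h : T ≤ t) (i : Fin n) (x : S i) (v : V) : u.Li lam i t x v = 0 := by
  rw [Li, dif_neg h.not_gt]

theorem M_of_le (h : T ≤ t) (v : V) : u.M lam t v = 0 := by
  rw [M, dif_neg h.not_gt]

end Unfold

theorem L_eq_sum_Li_sub_M (t : ℕ) (x : ∀ i, S i) (v : V) :
    u.L lam t x v = (∑ i, u.Li lam i t (x i) v) - u.M lam t v := by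
  rcases lt_or_ge t T with h | h
  · have IH (y : ∀ i, S i) (w : V) := L_eq_sum_Li_sub_M (t + 1) y w
    let stage (i : Fin n) (a : C i) : ℝ := u.g ⟨t, h⟩ i (x i) a + lam ⟨t, h⟩ v * u.z i a
      + ∑ w, u.P ⟨t, h⟩ v w * u.Li lam i (t + 1) (u.f ⟨t, h⟩ i (x i) a w) (u.ftil ⟨t, h⟩ v w)
    have objective_eq : ∀ a ∈ u.acts ⟨t, h⟩ x,
        (∑ i, u.g ⟨t, h⟩ i (x i) (a i)) + lam ⟨t, h⟩ v * ((∑ i, u.z i (a i)) - u.d v)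
          + ∑ w, u.P ⟨t, h⟩ v w *
              u.L lam (t + 1) (fun i => u.f ⟨t, h⟩ i (x i) (a i) w) (u.ftil ⟨t, h⟩ v w)
        = (∑ i, stage i (a i)) - u.M lam t v := by
      intro a _
      simp only [stage, IH, u.M_of_lt lam h, mul_sub, Finset.mul_sum, Finset.sum_sub_distrib,
        Finset.sum_add_distrib]
      rw [Finset.sum_comm]
      ring
    rw [u.L_of_lt lam h, Finset.inf'_congr _ rfl objective_eq, Finset.inf'_sub_const]
    congr 1
    exact (Fintype.inf'_piFinset_sum _ (fun i => u.A_nonempty _ i (x i)) stage).trans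
      (by simp only [stage, u.Li_of_lt lam h])
  · simp [u.L_of_le lam h, u.Li_of_le lam h, u.M_of_le lam h]
termination_by T - t

end UCSetup

theorem lagrangian_decomposition_general
    {T n : ℕ}
    {V D : Type} [Fintype V] [Fintype D]
    {S C : Fin n → Type}
    (u : UCSetup T n V D S C)
    (lam : Fin T → V → ℝ) (t : ℕ) (x : ∀ i, S i) (v : V) :
    u.L lam t x v = (∑ i, u.Li lam i t (x i) v) - u.M lam t v :=
  u.L_eq_sum_Li_sub_M lam t x v

/-- **Theorem 3.1 (decomposition of the Lagrangian recursion).**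
For every multiplier `λ`, every stage `t` (0-indexed, `t ≤ T`, corresponding to
periods `1,…,T+1`), every joint state `x` and every demand-summary state `v`,
`L_t(x,v;λ) = ∑_{i=1}^n L^i_t(x^i,v;λ) − M_t(v;λ)`. -/
theorem lagrangian_decomposition
    {T n : ℕ} (hT : 1 ≤ T) (hn : 1 ≤ n)
    {V D : Type} [Fintype V] [Fintype D] [Nonempty V] [Nonempty D]
    {S C : Fin n → Type} [∀ i, Fintype (S i)] [∀ i, Fintype (C i)]
    [∀ i, Nonempty (S i)] [∀ i, Nonempty (C i)]
    (u : UCSetup T n V D S C)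
    (lam : Fin T → V → ℝ) (t : ℕ) (ht : t ≤ T) (x : ∀ i, S i) (v : V) :
    u.L lam t x v = (∑ i, u.Li lam i t (x i) v) - u.M lam t v :=
  lagrangian_decomposition_general u lam t x v
end

section
/- For every multiplier λ, every t ∈ {1,…,T+1}, every joint state x ∈ ∏_{i=1}^n S_i and every v ∈ V, the relaxed value is a lower bound on the constrained value: L_t(x,v;λ) ≤ J_t(x,v). In particular, with t = 1 this is the weak-duality lower bound L_1(x_1,v_1;λ) ≤ J_1(x_1,v_1) of Theorem 3.2(1). -/
open Finset

/-! A feasible action is admissible and makes the penalty `λ_t(v) (∑ᵢ zⁱ(aⁱ) - d(v))` vanish,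
so the relaxed Bellman minimum is taken over a larger set than the constrained one, of an
objective that agrees with the constrained one there; backward induction on `t` gives
`L_t ≤ J_t`. -/

namespace UCSetup

variable {T n : ℕ} {V D : Type} [Fintype V] [Fintype D] {S C : Fin n → Type}
  (u : UCSetup T n V D S C)

lemma sum_P_mul_le_sum_P_mul (t : Fin T) (v : V) {φ ψ : D → ℝ} (h : ∀ w, φ w ≤ ψ w) :
    ∑ w, u.P t v w * φ w ≤ ∑ w, u.P t v w * ψ w :=
  sum_le_sum fun w _ => mul_le_mul_of_nonneg_left (h w) (u.P_nonneg t v w)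

theorem L_le_J (hfeas : ∀ t x v, (u.feas t x v).Nonempty) (lam : Fin T → V → ℝ) (t : ℕ)
    (x : ∀ i, S i) (v : V) : u.L lam t x v ≤ u.J hfeas t x v := by
  by_cases h : t < T
  · rw [L, J, dif_pos h, dif_pos h]
    refine le_inf' _ _ fun a ha => ?_
    obtain ⟨hadm, hdemand⟩ := mem_filter.mp ha
    calc _ ≤ _ := inf'_le _ hadm
      _ = _ := by rw [hdemand, sub_self, mul_zero, add_zero]
      _ ≤ _ := add_le_add le_rfl <|
        u.sum_P_mul_le_sum_P_mul _ _ fun w => L_le_J hfeas lam (t + 1) _ _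
  · rw [L, J, dif_neg h, dif_neg h]
termination_by T - t

end UCSetup

theorem relaxed_le_constrained_general
    {T n : ℕ}
    {V D : Type} [Fintype V] [Fintype D]
    {S C : Fin n → Type}
    (u : UCSetup T n V D S C)
    (hfeas : ∀ t x v, (u.feas t x v).Nonempty)
    (lam : Fin T → V → ℝ) (t : ℕ) (x : ∀ i, S i) (v : V) :
    u.L lam t x v ≤ u.J hfeas t x v :=
  u.L_le_J hfeas lam t x v

/-- **Theorem 3.2(1) (weak duality, stagewise).**
For every multiplier `λ` and every stage `t` (0-indexed, `t ≤ T`), joint state `x`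
and summary state `v`, the relaxed value is a lower bound on the constrained value:
`L_t(x,v;λ) ≤ J_t(x,v)`.  With `t = 0` (period 1) this is `L_1 ≤ J_1`. -/
theorem relaxed_le_constrained
    {T n : ℕ} (hT : 1 ≤ T) (hn : 1 ≤ n)
    {V D : Type} [Fintype V] [Fintype D] [Nonempty V] [Nonempty D]
    {S C : Fin n → Type} [∀ i, Fintype (S i)] [∀ i, Fintype (C i)]
    [∀ i, Nonempty (S i)] [∀ i, Nonempty (C i)]
    (u : UCSetup T n V D S C)
    (hfeas : ∀ t x v, (u.feas t x v).Nonempty)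
    (lam : Fin T → V → ℝ) (t : ℕ) (ht : t ≤ T) (x : ∀ i, S i) (v : V) :
    u.L lam t x v ≤ u.J hfeas t x v :=
  relaxed_le_constrained_general u hfeas lam t x v
end

section
/- For every t ∈ {1,…,T+1}, every joint state x ∈ ∏_{i=1}^n S_i and every v ∈ V, the map λ ↦ L_t(x,v;λ) is concave on the whole multiplier space (Fin T → V → ℝ): for all multipliers λ, μ and all θ ∈ [0,1], L_t(x,v; θ·λ + (1−θ)·μ) ≥ θ·L_t(x,v;λ) + (1−θ)·L_t(x,v;μ). In particular (Theorem 3.2(2)) λ ↦ L_1(x,v;λ) is a concave function of λ. -/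
open Finset

theorem UCSetup.L_eq_lt {T n : ℕ} {V D : Type} [Fintype V] [Fintype D]
    {S C : Fin n → Type} (u : UCSetup T n V D S C) (lam : Fin T → V → ℝ)
    (t : ℕ) (h : t < T) (x : ∀ i, S i) (v : V) :
    u.L lam t x v = (u.acts ⟨t, h⟩ x).inf' (u.acts_nonempty ⟨t, h⟩ x) (fun a =>
      (∑ i, u.g ⟨t, h⟩ i (x i) (a i))
        + lam ⟨t, h⟩ v * ((∑ i, u.z i (a i)) - u.d v)
        + ∑ w, u.P ⟨t, h⟩ v w *
            u.L lam (t + 1) (fun i => u.f ⟨t, h⟩ i (x i) (a i) w)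
              (u.ftil ⟨t, h⟩ v w)) := by
  conv_lhs => rw [UCSetup.L]
  simp only [dif_pos h]

theorem UCSetup.L_eq_ge {T n : ℕ} {V D : Type} [Fintype V] [Fintype D]
    {S C : Fin n → Type} (u : UCSetup T n V D S C) (lam : Fin T → V → ℝ)
    (t : ℕ) (h : ¬ t < T) (x : ∀ i, S i) (v : V) :
    u.L lam t x v = 0 := by
  conv_lhs => rw [UCSetup.L]
  simp only [dif_neg h]

theorem UCSetup.L_concave_aux {T n : ℕ} {V D : Type} [Fintype V] [Fintype D]
    {S C : Fin n → Type}
    (u : UCSetup T n V D S C) (lam mu : Fin T → V → ℝ) (θ : ℝ)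
    (h0 : 0 ≤ θ) (h1 : θ ≤ 1) (t : ℕ) (x : ∀ i, S i) (v : V) :
    θ * u.L lam t x v + (1 - θ) * u.L mu t x v ≤
      u.L (θ • lam + (1 - θ) • mu) t x v := by
  by_cases h : t < T
  · rw [u.L_eq_lt lam t h, u.L_eq_lt mu t h, u.L_eq_lt (θ • lam + (1 - θ) • mu) t h]
    apply Finset.le_inf'
    intro a ha
    have Hl := Finset.inf'_le (fun a =>
      (∑ i, u.g ⟨t, h⟩ i (x i) (a i))
        + lam ⟨t, h⟩ v * ((∑ i, u.z i (a i)) - u.d v)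
        + ∑ w, u.P ⟨t, h⟩ v w *
            u.L lam (t + 1) (fun i => u.f ⟨t, h⟩ i (x i) (a i) w)
              (u.ftil ⟨t, h⟩ v w)) ha
    have Hm := Finset.inf'_le (fun a =>
      (∑ i, u.g ⟨t, h⟩ i (x i) (a i))
        + mu ⟨t, h⟩ v * ((∑ i, u.z i (a i)) - u.d v)
        + ∑ w, u.P ⟨t, h⟩ v w *
            u.L mu (t + 1) (fun i => u.f ⟨t, h⟩ i (x i) (a i) w)
              (u.ftil ⟨t, h⟩ v w)) ha
    have step : θ * ((u.acts ⟨t, h⟩ x).inf' (u.acts_nonempty ⟨t, h⟩ x) fun a =>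
          (∑ i, u.g ⟨t, h⟩ i (x i) (a i))
            + lam ⟨t, h⟩ v * ((∑ i, u.z i (a i)) - u.d v)
            + ∑ w, u.P ⟨t, h⟩ v w *
                u.L lam (t + 1) (fun i => u.f ⟨t, h⟩ i (x i) (a i) w)
                  (u.ftil ⟨t, h⟩ v w))
        + (1 - θ) * ((u.acts ⟨t, h⟩ x).inf' (u.acts_nonempty ⟨t, h⟩ x) fun a =>
          (∑ i, u.g ⟨t, h⟩ i (x i) (a i))
            + mu ⟨t, h⟩ v * ((∑ i, u.z i (a i)) - u.d v)
            + ∑ w, u.P ⟨t, h⟩ v w *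
                u.L mu (t + 1) (fun i => u.f ⟨t, h⟩ i (x i) (a i) w)
                  (u.ftil ⟨t, h⟩ v w))
        ≤ θ * ((∑ i, u.g ⟨t, h⟩ i (x i) (a i))
            + lam ⟨t, h⟩ v * ((∑ i, u.z i (a i)) - u.d v)
            + ∑ w, u.P ⟨t, h⟩ v w *
                u.L lam (t + 1) (fun i => u.f ⟨t, h⟩ i (x i) (a i) w)
                  (u.ftil ⟨t, h⟩ v w))
          + (1 - θ) * ((∑ i, u.g ⟨t, h⟩ i (x i) (a i))
            + mu ⟨t, h⟩ v * ((∑ i, u.z i (a i)) - u.d v)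
            + ∑ w, u.P ⟨t, h⟩ v w *
                u.L mu (t + 1) (fun i => u.f ⟨t, h⟩ i (x i) (a i) w)
                  (u.ftil ⟨t, h⟩ v w)) := by
      gcongr <;> linarith
    refine step.trans ?_
    have hsum : ∑ w, u.P ⟨t, h⟩ v w *
          (θ * u.L lam (t + 1) (fun i => u.f ⟨t, h⟩ i (x i) (a i) w)
              (u.ftil ⟨t, h⟩ v w)
           + (1 - θ) * u.L mu (t + 1) (fun i => u.f ⟨t, h⟩ i (x i) (a i) w)
              (u.ftil ⟨t, h⟩ v w))
        ≤ ∑ w, u.P ⟨t, h⟩ v w *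
            u.L (θ • lam + (1 - θ) • mu) (t + 1)
              (fun i => u.f ⟨t, h⟩ i (x i) (a i) w) (u.ftil ⟨t, h⟩ v w) := by
      apply Finset.sum_le_sum
      intro w _
      exact mul_le_mul_of_nonneg_left
        (u.L_concave_aux lam mu θ h0 h1 (t + 1) _ _) (u.P_nonneg ⟨t, h⟩ v w)
    have expand : θ * (∑ w, u.P ⟨t, h⟩ v w *
            u.L lam (t + 1) (fun i => u.f ⟨t, h⟩ i (x i) (a i) w)
              (u.ftil ⟨t, h⟩ v w))
        + (1 - θ) * (∑ w, u.P ⟨t, h⟩ v w *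
            u.L mu (t + 1) (fun i => u.f ⟨t, h⟩ i (x i) (a i) w)
              (u.ftil ⟨t, h⟩ v w))
        = ∑ w, u.P ⟨t, h⟩ v w *
          (θ * u.L lam (t + 1) (fun i => u.f ⟨t, h⟩ i (x i) (a i) w)
              (u.ftil ⟨t, h⟩ v w)
           + (1 - θ) * u.L mu (t + 1) (fun i => u.f ⟨t, h⟩ i (x i) (a i) w)
              (u.ftil ⟨t, h⟩ v w)) := by
      rw [Finset.mul_sum, Finset.mul_sum, ← Finset.sum_add_distrib]
      apply Finset.sum_congr rfl
      intro w _
      ring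
    have happ : (θ • lam + (1 - θ) • mu) ⟨t, h⟩ v
        = θ * lam ⟨t, h⟩ v + (1 - θ) * mu ⟨t, h⟩ v := by
      simp [Pi.add_apply, Pi.smul_apply, smul_eq_mul]
    rw [happ]
    nlinarith [hsum, expand]
  · rw [u.L_eq_ge lam t h, u.L_eq_ge mu t h, u.L_eq_ge (θ • lam + (1 - θ) • mu) t h]
    norm_num
termination_by T - t
decreasing_by omega

/-- **Theorem 3.2(2) (concavity in the multiplier).**
For every stage `t` (0-indexed, `t ≤ T`), joint state `x` and summary state `v`,
the map `λ ↦ L_t(x,v;λ)` is concave on the multiplier space `Fin T → V → ℝ`: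
for all multipliers `λ, μ` and all `θ ∈ [0,1]`,
`L_t(x,v; θ·λ + (1−θ)·μ) ≥ θ·L_t(x,v;λ) + (1−θ)·L_t(x,v;μ)`. -/
theorem relaxed_value_concave
    {T n : ℕ} (hT : 1 ≤ T) (hn : 1 ≤ n)
    {V D : Type} [Fintype V] [Fintype D] [Nonempty V] [Nonempty D]
    {S C : Fin n → Type} [∀ i, Fintype (S i)] [∀ i, Fintype (C i)]
    [∀ i, Nonempty (S i)] [∀ i, Nonempty (C i)]
    (u : UCSetup T n V D S C)
    (t : ℕ) (ht : t ≤ T) (x : ∀ i, S i) (v : V)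
    (lam mu : Fin T → V → ℝ) (θ : ℝ) (hθ : θ ∈ Set.Icc (0 : ℝ) 1) :
    θ * u.L lam t x v + (1 - θ) * u.L mu t x v ≤
      u.L (θ • lam + (1 - θ) • mu) t x v :=
  UCSetup.L_concave_aux u lam mu θ hθ.1 hθ.2 t x v
end

section
/- Fix a multiplier λ, a joint state x ∈ ∏_{i=1}^n S_i and v ∈ V. If π* is a Markov policy attaining the relaxed value at λ, i.e., W_1(x,v;λ,π*) = L_1(x,v;λ), then for every multiplier μ: L_1(x,v;μ) ≤ L_1(x,v;λ) + (W_1(x,v;μ,π*) − W_1(x,v;λ,π*)). (Theorem 3.3: since μ ↦ W_1(x,v;μ,π*) is affine in the multiplier with slope given by the expected demand violations of π*, this says the vector of expected demand violations under an optimal policy for the Lagrangian problem is a supergradient of λ ↦ L_1(x,v;λ) at λ.) -/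
open Finset

theorem UCSetup.L_le_W {T n : ℕ} {V D : Type} [Fintype V] [Fintype D]
    {S C : Fin n → Type} (u : UCSetup T n V D S C)
    (mu : Fin T → V → ℝ) (π : Fin T → (∀ i, S i) → V → ∀ i, C i)
    (hπ : u.IsPolicy π) (t : ℕ) (x : ∀ i, S i) (v : V) :
    u.L mu t x v ≤ u.W mu π t x v := by
  rw [UCSetup.L, UCSetup.W]
  by_cases h : t < T
  · simp only [dif_pos h]
    refine le_trans (Finset.inf'_le (b := π ⟨t, h⟩ x v) _ ?_) ?_
    · exact Fintype.mem_piFinset.mpr fun i => hπ ⟨t, h⟩ x v i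
    · gcongr with w _
      · exact u.P_nonneg ⟨t, h⟩ v w
      · exact u.L_le_W mu π hπ (t + 1) _ _
  · simp [dif_neg h]
termination_by T - t
decreasing_by omega

/-- **Theorem 3.3 (supergradient inequality).**
Fix a multiplier `λ`, a joint state `x` and `v ∈ V`.  If `π*` is an (admissible)
Markov policy attaining the relaxed value at `λ`, i.e. `W_1(x,v;λ,π*) = L_1(x,v;λ)`
(stage 1 is index 0), then for every multiplier `μ`,
`L_1(x,v;μ) ≤ L_1(x,v;λ) + (W_1(x,v;μ,π*) − W_1(x,v;λ,π*))`. -/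
theorem supergradient_inequality
    {T n : ℕ} (hT : 1 ≤ T) (hn : 1 ≤ n)
    {V D : Type} [Fintype V] [Fintype D] [Nonempty V] [Nonempty D]
    {S C : Fin n → Type} [∀ i, Fintype (S i)] [∀ i, Fintype (C i)]
    [∀ i, Nonempty (S i)] [∀ i, Nonempty (C i)]
    (u : UCSetup T n V D S C)
    (lam : Fin T → V → ℝ) (x : ∀ i, S i) (v : V)
    (π : Fin T → (∀ i, S i) → V → ∀ i, C i) (hπ : u.IsPolicy π)
    (hopt : u.W lam π 0 x v = u.L lam 0 x v) :
    ∀ mu : Fin T → V → ℝ,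
      u.L mu 0 x v ≤ u.L lam 0 x v + (u.W mu π 0 x v - u.W lam π 0 x v) := by
  intro mu
  have := u.L_le_W mu π hπ 0 x v
  linarith [hopt]
end
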